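/- arXiv:1012.1018 — 5 statements merged into one kernel-verified Lean document; each statement's English description precedes it below -/
import Mathlib

section
/- Let M ∈ GL(V) satisfy M⋆ = M and MΩ = Ω, and let p : V → V⁺ denote the linear projection onto V⁺ along V⁻. If v ∈ V is such that p(v) lies in the closure of Ω and p(−M⁻¹v) lies in the closure of Ω, then p(v) = 0, i.e. v ∈ V⁻. -/
noncomputable section
open scoped Classical

open Function

variable {V : Type} [AddCommGroup V] [Module ℝ V]

/-- The quadratic representation `P(x) = 2 L(x)² − L(x²)`. -/
def Pq (mul : V →ₗ[ℝ] V →ₗ[ℝ] V) (x : V) : V →ₗ[ℝ] V :=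
  2 • (mul x ∘ₗ mul x) - mul (mul x x)

/-- The Jordan inverse `x⁻¹ = P(x)⁻¹ x` (junk value `0` when `x` is not invertible). -/
def jinv (mul : V →ₗ[ℝ] V →ₗ[ℝ] V) (x : V) : V :=
  if h : Function.Bijective (Pq mul x) then (LinearEquiv.ofBijective (Pq mul x) h).symm x else 0

/-- The trace form `α(x,y) = Tr L(xy)`. -/
def αf (mul : V →ₗ[ℝ] V →ₗ[ℝ] V) (x y : V) : ℝ :=
  LinearMap.trace ℝ V (mul (mul x y))

/-- The symmetric cone `Ω = {x² : x ∈ V⁺ invertible}`. -/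
def omg (mul : V →ₗ[ℝ] V →ₗ[ℝ] V) (st : V →ₗ[ℝ] V) : Set V :=
  {y | ∃ x, st x = x ∧ Function.Bijective (Pq mul x) ∧ y = mul x x}

/-!
Since `⋆` commutes with `M`, so does the projection `p = (1 + ⋆)/2`; hence
`p(-M⁻¹v) = -M⁻¹ p(v)`, and `M Ω̄ = Ω̄` puts `-p(v)` into `Ω̄` together with `p(v)`.
The cone is pointed: `α(x, y⋆)` is an inner product, so for `s ∈ V⁺` the linear form
`Tr L(s²) = α(s, s⋆)` is at least `c‖s‖² ≥ c'‖s²‖`. Thus `‖a‖ ≤ K Tr L(a)` on `Ω̄`, and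
`a, -a ∈ Ω̄` forces `a = 0`.
-/

section TraceForm

variable {E : Type} [AddCommGroup E] [Module ℝ E] {mul : E →ₗ[ℝ] E →ₗ[ℝ] E} {st : E →ₗ[ℝ] E}

def jtrace (mul : E →ₗ[ℝ] E →ₗ[ℝ] E) : E →ₗ[ℝ] ℝ :=
  LinearMap.trace ℝ E ∘ₗ mul

theorem αf_eq_jtrace (x y : E) : αf mul x y = jtrace mul (mul x y) := rfl

/-- `L(z⋆)` is the conjugate of `L(z)` by the involution `⋆`. -/
theorem jtrace_star (hst_invol : Involutive st)
    (hst_mul : ∀ x y : E, st (mul x y) = mul (st x) (st y)) (z : E) :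
    jtrace mul (st z) = jtrace mul z := by
  set e := LinearEquiv.ofInvolutive st hst_invol
  have he_symm (w : E) : e.symm w = st w := e.symm_apply_eq.mpr (hst_invol w).symm
  have hconj : mul (st z) = e.conj (mul z) := by
    ext w
    simp [e, LinearEquiv.conj_apply, he_symm, hst_mul, hst_invol w]
  simp [jtrace, hconj]

theorem αf_star_star (hst_invol : Involutive st)
    (hst_mul : ∀ x y : E, st (mul x y) = mul (st x) (st y)) (x y : E) :
    αf mul (st x) (st y) = αf mul x y := by
  rw [αf_eq_jtrace, αf_eq_jtrace, ← hst_mul, jtrace_star hst_invol hst_mul]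

theorem αf_eq_zero_of_star_eq_of_star_eq_neg (hst_invol : Involutive st)
    (hst_mul : ∀ x y : E, st (mul x y) = mul (st x) (st y)) {u w : E}
    (hu : st u = u) (hw : st w = -w) : αf mul u w = 0 ∧ αf mul w u = 0 := by
  have huw := αf_star_star hst_invol hst_mul u w
  have hwu := αf_star_star hst_invol hst_mul w u
  simp only [hu, hw, αf_eq_jtrace, map_neg, LinearMap.neg_apply] at huw hwu
  simp only [αf_eq_jtrace]
  constructor <;> linarith

/-- The squared norm for the inner product `⟨x, y⟩ = α(x, y⋆)`. -/
def starForm (mul : E →ₗ[ℝ] E →ₗ[ℝ] E) (st : E →ₗ[ℝ] E) (x : E) : ℝ :=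
  αf mul x (st x)

theorem starForm_smul (r : ℝ) (x : E) : starForm mul st (r • x) = r ^ 2 * starForm mul st x := by
  simp only [starForm, αf_eq_jtrace, map_smul, LinearMap.smul_apply, smul_eq_mul]
  ring

theorem starForm_pos (hst_invol : Involutive st)
    (hst_mul : ∀ x y : E, st (mul x y) = mul (st x) (st y))
    (hα_pos : ∀ x : E, st x = x → x ≠ 0 → 0 < αf mul x x)
    (hα_neg : ∀ x : E, st x = -x → x ≠ 0 → αf mul x x < 0) {x : E} (hx : x ≠ 0) :
    0 < starForm mul st x := by
  set u := (2⁻¹ : ℝ) • (x + st x)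
  set w := (2⁻¹ : ℝ) • (x - st x)
  have hu : st u = u := by simp only [u, map_smul, map_add, hst_invol x, add_comm]
  have hw : st w = -w := by simp only [w, map_smul, map_sub, hst_invol x, ← smul_neg, neg_sub]
  obtain ⟨huw, hwu⟩ := αf_eq_zero_of_star_eq_of_star_eq_neg hst_invol hst_mul hu hw
  have hxuw : x = u + w := by simp only [u, w]; module
  have hsplit : starForm mul st x = αf mul u u - αf mul w w := by
    have hstx : st x = u - w := by simp only [u, w]; module
    rw [starForm, hstx, hxuw]
    simp only [αf_eq_jtrace] at huw hwu ⊢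
    simp only [map_add, map_sub, LinearMap.add_apply, huw, hwu]
    ring
  have hu_nonneg : 0 ≤ αf mul u u := by
    rcases eq_or_ne u 0 with h0 | h0
    · simp [αf, h0]
    · exact (hα_pos u hu h0).le
  have hw_nonpos : αf mul w w ≤ 0 := by
    rcases eq_or_ne w 0 with h0 | h0
    · simp [αf, h0]
    · exact (hα_neg w hw h0).le
  have huw_ne : u ≠ 0 ∨ w ≠ 0 := by
    by_contra! h
    exact hx (by rw [hxuw, h.1, h.2, add_zero])
  rw [hsplit]
  rcases huw_ne with h0 | h0
  · linarith [hα_pos u hu h0]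
  · linarith [hα_neg w hw h0]

end TraceForm

theorem exists_pos_mul_norm_sq_le {F : Type*} [NormedAddCommGroup F] [NormedSpace ℝ F]
    [FiniteDimensional ℝ F] {f : F → ℝ} (hf : Continuous f)
    (hsmul : ∀ (r : ℝ) (x : F), f (r • x) = r ^ 2 * f x) (hpos : ∀ x ≠ 0, 0 < f x) :
    ∃ c > 0, ∀ x, c * ‖x‖ ^ 2 ≤ f x := by
  have hf0 : f 0 = 0 := by simpa using hsmul 0 0
  rcases subsingleton_or_nontrivial F with hF | hF
  · refine ⟨1, one_pos, fun x => ?_⟩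
    simp [Subsingleton.elim x 0, hf0]
  obtain ⟨x₀, hx₀, hmin⟩ := (isCompact_sphere (0 : F) 1).exists_isMinOn
    (NormedSpace.sphere_nonempty.mpr zero_le_one) hf.continuousOn
  have hx₀_ne : x₀ ≠ 0 := ne_zero_of_mem_unit_sphere ⟨x₀, hx₀⟩
  refine ⟨f x₀, hpos x₀ hx₀_ne, fun x => ?_⟩
  rcases eq_or_ne x 0 with rfl | hx
  · simp [hf0]
  have hnorm : ‖x‖ ≠ 0 := norm_ne_zero_iff.mpr hx
  have hunit : ‖x‖⁻¹ • x ∈ Metric.sphere (0 : F) 1 := by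
    rw [mem_sphere_zero_iff_norm, norm_smul, norm_inv, norm_norm, inv_mul_cancel₀ hnorm]
  have h := isMinOn_iff.mp hmin _ hunit
  rw [hsmul] at h
  calc f x₀ * ‖x‖ ^ 2 ≤ ‖x‖⁻¹ ^ 2 * f x * ‖x‖ ^ 2 := by gcongr
    _ = f x := by field_simp

section StarProjection

variable {E : Type} [AddCommGroup E] [Module ℝ E] {st p : E →ₗ[ℝ] E}

theorem two_smul_eq_add_star (hp_plus : ∀ v : E, st (p v) = p v)
    (hp_minus : ∀ v : E, st (v - p v) = -(v - p v)) (v : E) : (2 : ℝ) • p v = v + st v := by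
  have h := hp_minus v
  rw [map_sub, hp_plus] at h
  linear_combination (norm := module) -h

theorem apply_comm_of_star_comm (hp_plus : ∀ v : E, st (p v) = p v)
    (hp_minus : ∀ v : E, st (v - p v) = -(v - p v)) (f : E →ₗ[ℝ] E)
    (hf : ∀ x, st (f x) = f (st x)) (x : E) : p (f x) = f (p x) := by
  apply smul_right_injective E (two_ne_zero : (2 : ℝ) ≠ 0)
  dsimp only
  rw [two_smul_eq_add_star hp_plus hp_minus, ← map_smul, two_smul_eq_add_star hp_plus hp_minus,
    map_add, hf]

theorem star_symm_apply_comm (hst_invol : Involutive st) (M : E ≃ₗ[ℝ] E)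
    (hM : ∀ x, st (M (st x)) = M x) (x : E) : st (M.symm x) = M.symm (st x) := by
  have hMst (y : E) : st (M y) = M (st y) := by simpa [hst_invol y] using hM (st y)
  apply M.injective
  rw [← hMst, M.apply_symm_apply, M.apply_symm_apply]

end StarProjection

section SymmetricCone

variable {E : Type} [NormedAddCommGroup E] [NormedSpace ℝ E] [FiniteDimensional ℝ E]
  {mul : E →ₗ[ℝ] E →ₗ[ℝ] E} {st : E →ₗ[ℝ] E}

theorem continuous_starForm : Continuous (starForm mul st) :=
  (jtrace mul).continuous_of_finiteDimensional.comp <|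
    mul.toContinuousBilinearMap.continuous₂.comp
      (continuous_id.prodMk st.continuous_of_finiteDimensional)

theorem exists_norm_le_mul_jtrace_of_mem_closure_omg (hst_invol : Involutive st)
    (hst_mul : ∀ x y : E, st (mul x y) = mul (st x) (st y))
    (hα_pos : ∀ x : E, st x = x → x ≠ 0 → 0 < αf mul x x)
    (hα_neg : ∀ x : E, st x = -x → x ≠ 0 → αf mul x x < 0) :
    ∃ K, ∀ y ∈ closure (omg mul st), ‖y‖ ≤ K * jtrace mul y := by
  obtain ⟨c, hc, hcoer⟩ := exists_pos_mul_norm_sq_le continuous_starForm starForm_smul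
    fun x hx => starForm_pos hst_invol hst_mul hα_pos hα_neg hx
  set B := mul.toContinuousBilinearMap
  refine ⟨‖B‖ / c, fun y hy => closure_minimal ?_ (isClosed_le continuous_norm
    (continuous_const.mul (jtrace mul).continuous_of_finiteDimensional)) hy⟩
  rintro _ ⟨s, hs, -, rfl⟩
  have hQ : starForm mul st s = jtrace mul (mul s s) := by rw [starForm, hs]; rfl
  calc ‖mul s s‖ ≤ ‖B‖ * ‖s‖ * ‖s‖ := B.le_opNorm₂ s s
    _ = ‖B‖ / c * (c * ‖s‖ ^ 2) := by field_simp
    _ ≤ ‖B‖ / c * jtrace mul (mul s s) := by rw [← hQ]; gcongr; exact hcoer s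

theorem eq_zero_of_mem_closure_omg_of_neg_mem (hst_invol : Involutive st)
    (hst_mul : ∀ x y : E, st (mul x y) = mul (st x) (st y))
    (hα_pos : ∀ x : E, st x = x → x ≠ 0 → 0 < αf mul x x)
    (hα_neg : ∀ x : E, st x = -x → x ≠ 0 → αf mul x x < 0) {a : E}
    (ha : a ∈ closure (omg mul st)) (hna : -a ∈ closure (omg mul st)) : a = 0 := by
  obtain ⟨K, hK⟩ := exists_norm_le_mul_jtrace_of_mem_closure_omg hst_invol hst_mul hα_pos hα_neg
  have h := hK a ha
  have h' := hK (-a) hna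
  rw [norm_neg, map_neg] at h'
  exact norm_le_zero_iff.mp (by linarith)

end SymmetricCone

theorem stmt5_general {V : Type} [NormedAddCommGroup V] [NormedSpace ℝ V] [FiniteDimensional ℝ V]
    (mul : V →ₗ[ℝ] V →ₗ[ℝ] V)
    (st : V →ₗ[ℝ] V)
    (hst_invol : ∀ x : V, st (st x) = x)
    (hst_mul : ∀ x y : V, st (mul x y) = mul (st x) (st y))
    (hα_pos : ∀ x : V, st x = x → x ≠ 0 → 0 < αf mul x x)
    (hα_neg : ∀ x : V, st x = -x → x ≠ 0 → αf mul x x < 0)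
    (M : V ≃ₗ[ℝ] V)
    (hMstar : ∀ x : V, st (M (st x)) = M x)
    (hMΩ : ⇑M '' omg mul st = omg mul st)
    (p : V →ₗ[ℝ] V)
    (hp_plus : ∀ v : V, st (p v) = p v)
    (hp_minus : ∀ v : V, st (v - p v) = -(v - p v))
    (v : V)
    (hv : p v ∈ closure (omg mul st))
    (hv' : p (-(M.symm v)) ∈ closure (omg mul st)) :
    p v = 0 := by
  have hpM : p (-(M.symm v)) = -M.symm (p v) :=
    (map_neg p _).trans <| congrArg Neg.neg <| apply_comm_of_star_comm hp_plus hp_minus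
      M.symm.toLinearMap (star_symm_apply_comm hst_invol M hMstar) v
  have hM_closure : ⇑M '' closure (omg mul st) = closure (omg mul st) := by
    simpa [hMΩ] using M.toContinuousLinearEquiv.image_closure (omg mul st)
  have hneg : -p v ∈ closure (omg mul st) := by
    rw [← hM_closure]
    exact ⟨_, hv', by simp [hpM]⟩
  exact eq_zero_of_mem_closure_omg_of_neg_mem hst_invol hst_mul hα_pos hα_neg hv hneg

theorem stmt5 {V : Type} [NormedAddCommGroup V] [NormedSpace ℝ V] [FiniteDimensional ℝ V]
    (mul : V →ₗ[ℝ] V →ₗ[ℝ] V) (e : V)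
    (hcomm : ∀ x y : V, mul x y = mul y x)
    (hunit : ∀ x : V, mul e x = x)
    (hjordan : ∀ x y : V, mul x (mul (mul x x) y) = mul (mul x x) (mul x y))
    (st : V →ₗ[ℝ] V)
    (hst_invol : ∀ x : V, st (st x) = x)
    (hst_mul : ∀ x y : V, st (mul x y) = mul (st x) (st y))
    (hα_nondeg : ∀ x : V, (∀ y : V, αf mul x y = 0) → x = 0)
    (hα_pos : ∀ x : V, st x = x → x ≠ 0 → 0 < αf mul x x)
    (hα_neg : ∀ x : V, st x = -x → x ≠ 0 → αf mul x x < 0)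
    (M : V ≃ₗ[ℝ] V)
    (hMstar : ∀ x : V, st (M (st x)) = M x)
    (hMΩ : ⇑M '' omg mul st = omg mul st)
    (p : V →ₗ[ℝ] V)
    (hp_plus : ∀ v : V, st (p v) = p v)
    (hp_minus : ∀ v : V, st (v - p v) = -(v - p v))
    (v : V)
    (hv : p v ∈ closure (omg mul st))
    (hv' : p (-(M.symm v)) ∈ closure (omg mul st)) :
    p v = 0 :=
  stmt5_general mul st hst_invol hst_mul hα_pos hα_neg M hMstar hMΩ p hp_plus hp_minus v hv hv'
end
end

section
/- For g ∈ GL(V), the following are equivalent: (a) g{x,y,z} = {gx,gy,gz} for all x,y,z ∈ V and ge = e; (b) g(xy) = (gx)(gy) for all x,y ∈ V and g⋆ = g. -/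
noncomputable section
open scoped Classical

open Function

variable {V : Type} [AddCommGroup V] [Module ℝ V]

/-- The Jordan triple product `{x,y,z} = (xy⋆)z + x(y⋆z) − y⋆(xz)`. -/
def trip (mul : V →ₗ[ℝ] V →ₗ[ℝ] V) (st : V →ₗ[ℝ] V) (x y z : V) : V :=
  mul (mul x (st y)) z + mul x (mul (st y) z) - mul (st y) (mul x z)

/-! Since `e⋆ = e`, the triple product recovers both the product, `{x,e,z} = xz`, and the
involution, `{e,y,e} = y⋆`; conversely it is built from the product and `⋆` alone. -/

section UnitalStar

variable {mul : V →ₗ[ℝ] V →ₗ[ℝ] V} {e : V}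

theorem unit_unique (hcomm : ∀ x y : V, mul x y = mul y x) (hunit : ∀ x : V, mul e x = x)
    {u : V} (hu : ∀ y : V, mul u y = y) : u = e :=
  calc u = mul e u := (hunit u).symm
    _ = mul u e := hcomm e u
    _ = e := hu e

theorem star_unit (hcomm : ∀ x y : V, mul x y = mul y x) (hunit : ∀ x : V, mul e x = x)
    {st : V →ₗ[ℝ] V} (hst_invol : ∀ x : V, st (st x) = x)
    (hst_mul : ∀ x y : V, st (mul x y) = mul (st x) (st y)) : st e = e :=
  unit_unique hcomm hunit fun y => by rw [← hst_invol y, ← hst_mul, hunit, hst_invol]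

theorem trip_unit_middle (hcomm : ∀ x y : V, mul x y = mul y x) (hunit : ∀ x : V, mul e x = x)
    {st : V →ₗ[ℝ] V} (hste : st e = e) (x z : V) : trip mul st x e z = mul x z := by
  simp only [trip, hste, hcomm x e, hunit, add_sub_cancel_right]

theorem trip_unit_outer (hcomm : ∀ x y : V, mul x y = mul y x) (hunit : ∀ x : V, mul e x = x)
    (st : V →ₗ[ℝ] V) (y : V) : trip mul st e y e = st y := by
  simp only [trip, hunit, hcomm (st y) e, add_sub_cancel_left]

end UnitalStar

theorem trip_map_of_map_mul {mul : V →ₗ[ℝ] V →ₗ[ℝ] V} {st g : V →ₗ[ℝ] V}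
    (hmul : ∀ x y : V, g (mul x y) = mul (g x) (g y)) (hgst : ∀ x : V, g (st x) = st (g x))
    (x y z : V) : g (trip mul st x y z) = trip mul st (g x) (g y) (g z) := by
  simp only [trip, map_add, map_sub, hmul, hgst]

theorem stmt6_general {V : Type} [AddCommGroup V] [Module ℝ V]
    (mul : V →ₗ[ℝ] V →ₗ[ℝ] V) (e : V)
    (hcomm : ∀ x y : V, mul x y = mul y x)
    (hunit : ∀ x : V, mul e x = x)
    (st : V →ₗ[ℝ] V)
    (hst_invol : ∀ x : V, st (st x) = x)
    (hst_mul : ∀ x y : V, st (mul x y) = mul (st x) (st y))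
    (g : V →ₗ[ℝ] V) (hg : Function.Bijective g) :
    ((∀ x y z : V, g (trip mul st x y z) = trip mul st (g x) (g y) (g z)) ∧ g e = e) ↔
      ((∀ x y : V, g (mul x y) = mul (g x) (g y)) ∧ ∀ x : V, st (g (st x)) = g x) := by
  have hste := star_unit hcomm hunit hst_invol hst_mul
  constructor
  · rintro ⟨htrip, hge⟩
    have hmul : ∀ x y : V, g (mul x y) = mul (g x) (g y) := fun x y => by
      rw [← trip_unit_middle hcomm hunit hste, htrip, hge, trip_unit_middle hcomm hunit hste]
    have hgst : ∀ y : V, g (st y) = st (g y) := fun y => by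
      rw [← trip_unit_outer hcomm hunit st, htrip, hge, trip_unit_outer hcomm hunit]
    exact ⟨hmul, fun x => by rw [hgst, hst_invol]⟩
  · rintro ⟨hmul, hstar⟩
    -- `g e` acts as a unit on the image of `g`, which is all of `V`.
    have hge : g e = e := unit_unique hcomm hunit fun y => by
      obtain ⟨x, rfl⟩ := hg.2 y
      rw [← hmul, hunit]
    have hgst : ∀ y : V, g (st y) = st (g y) := fun y => by rw [← hstar y, hst_invol]
    exact ⟨trip_map_of_map_mul hmul hgst, hge⟩

theorem stmt6 {V : Type} [AddCommGroup V] [Module ℝ V] [FiniteDimensional ℝ V]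
    (mul : V →ₗ[ℝ] V →ₗ[ℝ] V) (e : V)
    (hcomm : ∀ x y : V, mul x y = mul y x)
    (hunit : ∀ x : V, mul e x = x)
    (hjordan : ∀ x y : V, mul x (mul (mul x x) y) = mul (mul x x) (mul x y))
    (st : V →ₗ[ℝ] V)
    (hst_invol : ∀ x : V, st (st x) = x)
    (hst_mul : ∀ x y : V, st (mul x y) = mul (st x) (st y))
    (hα_nondeg : ∀ x : V, (∀ y : V, αf mul x y = 0) → x = 0)
    (hα_pos : ∀ x : V, st x = x → x ≠ 0 → 0 < αf mul x x)
    (hα_neg : ∀ x : V, st x = -x → x ≠ 0 → αf mul x x < 0)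
    (g : V →ₗ[ℝ] V) (hg : Function.Bijective g) :
    ((∀ x y z : V, g (trip mul st x y z) = trip mul st (g x) (g y) (g z)) ∧ g e = e) ↔
      ((∀ x y : V, g (mul x y) = mul (g x) (g y)) ∧ ∀ x : V, st (g (st x)) = g x) :=
  stmt6_general mul e hcomm hunit st hst_invol hst_mul g hg
end
end

section
/- For g ∈ GL(V), the following are equivalent: (a) P(gx) = g ∘ P(x) ∘ ᵗg for all x ∈ V; (b) Q(gx) = g ∘ Q(x) ∘ ᵗ(g⋆) for all x ∈ V, where Q(x) is the linear map y ↦ P(x)(y⋆). In other words, Str(V') = Str(V). -/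
/-! Since the Cartan involution `⋆` is an automorphism, `L(x⋆) = ⋆ ∘ L(x) ∘ ⋆` and the trace form is
`⋆`-invariant. Hence the adjoint of `g⋆` is `(ᵗg)⋆`, and then `g ∘ Q(x) ∘ ᵗ(g⋆) = g ∘ P(x) ∘ ᵗg ∘ ⋆`,
so (b) is (a) composed on the right with the bijection `⋆`. -/

noncomputable section
open scoped Classical

open Function

variable {V : Type} [AddCommGroup V] [Module ℝ V]

section TraceForm

variable {mul : V →ₗ[ℝ] V →ₗ[ℝ] V} {st : V →ₗ[ℝ] V}

theorem αf_comm (hcomm : ∀ x y : V, mul x y = mul y x) (a b : V) :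
    αf mul a b = αf mul b a := by
  rw [αf, αf, hcomm]

theorem αf_sub_right (a b c : V) : αf mul a (b - c) = αf mul a b - αf mul a c := by
  simp only [αf, map_sub]

theorem eq_of_forall_αf_eq (hcomm : ∀ x y : V, mul x y = mul y x)
    (hα_nondeg : ∀ x : V, (∀ y : V, αf mul x y = 0) → x = 0) {u v : V}
    (h : ∀ w, αf mul w u = αf mul w v) : u = v :=
  sub_eq_zero.mp <| hα_nondeg _ fun w => by rw [αf_comm hcomm, αf_sub_right, h, sub_self]

theorem mul_map_eq_conj (hst_invol : ∀ x : V, st (st x) = x)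
    (hst_mul : ∀ x y : V, st (mul x y) = mul (st x) (st y)) (z : V) :
    mul (st z) = (LinearEquiv.ofInvolutive st hst_invol).conj (mul z) := by
  ext w
  have hsymm : (LinearEquiv.ofInvolutive st hst_invol).symm w = st w :=
    LinearEquiv.symm_apply_eq _ |>.2 (hst_invol w).symm
  rw [LinearEquiv.conj_apply_apply, hsymm]
  exact ((hst_mul z (st w)).trans (by rw [hst_invol])).symm

theorem αf_map_map (hst_invol : ∀ x : V, st (st x) = x)
    (hst_mul : ∀ x y : V, st (mul x y) = mul (st x) (st y)) (a b : V) :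
    αf mul (st a) (st b) = αf mul a b := by
  rw [αf, ← hst_mul, mul_map_eq_conj hst_invol hst_mul, LinearMap.trace_conj', αf]

theorem αf_map_right (hst_invol : ∀ x : V, st (st x) = x)
    (hst_mul : ∀ x y : V, st (mul x y) = mul (st x) (st y)) (a b : V) :
    αf mul a (st b) = αf mul (st a) b := by
  rw [← αf_map_map hst_invol hst_mul, hst_invol]

theorem adjoint_conj_eq (hcomm : ∀ x y : V, mul x y = mul y x)
    (hst_invol : ∀ x : V, st (st x) = x)
    (hst_mul : ∀ x y : V, st (mul x y) = mul (st x) (st y))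
    (hα_nondeg : ∀ x : V, (∀ y : V, αf mul x y = 0) → x = 0)
    {g tg tgs : V →ₗ[ℝ] V} (htg : ∀ x y : V, αf mul (g x) y = αf mul x (tg y))
    (htgs : ∀ x y : V, αf mul (st (g (st x))) y = αf mul x (tgs y)) (y : V) :
    tgs y = st (tg (st y)) :=
  eq_of_forall_αf_eq hcomm hα_nondeg fun w => by
    rw [← htgs, ← αf_map_right hst_invol hst_mul, htg, αf_map_right hst_invol hst_mul]

end TraceForm

theorem stmt12_general {V : Type} [AddCommGroup V] [Module ℝ V]
    (mul : V →ₗ[ℝ] V →ₗ[ℝ] V)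
    (hcomm : ∀ x y : V, mul x y = mul y x)
    (st : V →ₗ[ℝ] V)
    (hst_invol : ∀ x : V, st (st x) = x)
    (hst_mul : ∀ x y : V, st (mul x y) = mul (st x) (st y))
    (hα_nondeg : ∀ x : V, (∀ y : V, αf mul x y = 0) → x = 0)
    (g : V →ₗ[ℝ] V)
    (tg : V →ₗ[ℝ] V)
    (htg : ∀ x y : V, αf mul (g x) y = αf mul x (tg y))
    (tgs : V →ₗ[ℝ] V)
    (htgs : ∀ x y : V, αf mul (st (g (st x))) y = αf mul x (tgs y)) :
    (∀ x y : V, Pq mul (g x) y = g (Pq mul x (tg y))) ↔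
      ∀ x y : V, Pq mul (g x) (st y) = g (Pq mul x (st (tgs y))) := by
  simp only [adjoint_conj_eq hcomm hst_invol hst_mul hα_nondeg htg htgs, hst_invol]
  exact forall_congr' fun x => (Function.Involutive.surjective hst_invol).forall

theorem stmt12 {V : Type} [AddCommGroup V] [Module ℝ V] [FiniteDimensional ℝ V]
    (mul : V →ₗ[ℝ] V →ₗ[ℝ] V) (e : V)
    (hcomm : ∀ x y : V, mul x y = mul y x)
    (hunit : ∀ x : V, mul e x = x)
    (hjordan : ∀ x y : V, mul x (mul (mul x x) y) = mul (mul x x) (mul x y))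
    (st : V →ₗ[ℝ] V)
    (hst_invol : ∀ x : V, st (st x) = x)
    (hst_mul : ∀ x y : V, st (mul x y) = mul (st x) (st y))
    (hα_nondeg : ∀ x : V, (∀ y : V, αf mul x y = 0) → x = 0)
    (hα_pos : ∀ x : V, st x = x → x ≠ 0 → 0 < αf mul x x)
    (hα_neg : ∀ x : V, st x = -x → x ≠ 0 → αf mul x x < 0)
    (g : V →ₗ[ℝ] V) (hg : Function.Bijective g)
    (tg : V →ₗ[ℝ] V)
    (htg : ∀ x y : V, αf mul (g x) y = αf mul x (tg y))
    (tgs : V →ₗ[ℝ] V)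
    (htgs : ∀ x y : V, αf mul (st (g (st x))) y = αf mul x (tgs y)) :
    (∀ x y : V, Pq mul (g x) y = g (Pq mul x (tg y))) ↔
      ∀ x y : V, Pq mul (g x) (st y) = g (Pq mul x (st (tgs y))) :=
  stmt12_general mul hcomm st hst_invol hst_mul hα_nondeg g tg htg tgs htgs
end
end

section
/- Let n ≥ 1 and let x be a real symmetric n×n matrix. Then x is positive definite or −x is positive definite if and only if trace(x·y·x·y) > 0 for every nonzero real symmetric n×n matrix y (products being ordinary matrix products), i.e. the quadratic form y ↦ trace((P(x)y)·y) with P(x)y := xyx is positive definite on the space of symmetric matrices. -/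
/-!
If `x` is positive definite, write `x = bᴴ b` with `b` invertible; then
`tr (x y x y) = tr (mᴴ m)` for `m = b y bᴴ ≠ 0`, which is positive. The case `-x` follows since
`tr (x y x y)` is even in `x`.

Conversely, taking `y = v vᵀ` gives `tr (x y x y) = (vᵀ x v)²`, so the quadratic form of `x` is
anisotropic. A real quadratic form taking both signs has a nonzero isotropic vector (the
restriction to a line through `u` in direction `w` is a quadratic with positive leading
coefficient and negative constant term), so an anisotropic real form is definite.
-/

open Matrix

namespace QuadraticMap

theorem apply_smul_add {R V : Type*} [CommRing R] [AddCommGroup V] [Module R V]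
    (Q : QuadraticForm R V) (t : R) (w u : V) :
    Q (t • w + u) = Q w * (t * t) + polar Q w u * t + Q u := by
  have h := polar_smul_left (Q := Q) t w u
  simp only [polar, QuadraticMap.map_smul, smul_eq_mul] at h ⊢
  linear_combination h

variable {V : Type*} [AddCommGroup V] [Module ℝ V]

theorem not_anisotropic_of_neg_of_pos {Q : QuadraticForm ℝ V} {u w : V} (hu : Q u < 0)
    (hw : 0 < Q w) : ¬ Q.Anisotropic := by
  have hdiscrim : 0 ≤ discrim (Q w) (polar Q w u) (Q u) := by
    unfold discrim
    nlinarith [sq_nonneg (polar Q w u)]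
  obtain ⟨t, ht⟩ := exists_quadratic_eq_zero hw.ne'
    ⟨√(discrim (Q w) (polar Q w u) (Q u)), (Real.mul_self_sqrt hdiscrim).symm⟩
  intro hQ
  have hzero : t • w + u = 0 := hQ _ (by rw [apply_smul_add, ht])
  rw [← neg_eq_of_add_eq_zero_right hzero, QuadraticMap.map_neg, QuadraticMap.map_smul,
    smul_eq_mul] at hu
  nlinarith [mul_self_nonneg t]

theorem Anisotropic.posDef_or_posDef_neg {Q : QuadraticForm ℝ V} (hQ : Q.Anisotropic) :
    Q.PosDef ∨ (-Q).PosDef := by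
  by_contra! ⟨hpos, hneg⟩
  simp only [PosDef, not_forall, not_lt, _root_.neg_apply, neg_nonpos] at hpos hneg
  obtain ⟨u, hu0, hu⟩ := hpos
  obtain ⟨w, hw0, hw⟩ := hneg
  exact not_anisotropic_of_neg_of_pos (hu.lt_of_ne (hQ.eq_zero_iff.not.mpr hu0))
    (hw.lt_of_ne' (hQ.eq_zero_iff.not.mpr hw0)) hQ

end QuadraticMap

namespace Matrix

theorem toQuadraticForm'_neg {n R : Type*} [Fintype n] [DecidableEq n] [CommRing R]
    (M : Matrix n n R) : (-M).toQuadraticForm' = -M.toQuadraticForm' := by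
  simp only [toQuadraticForm', map_neg, LinearMap.BilinMap.toQuadraticMap_neg]

theorem trace_mul_vecMulVec_mul_mul_vecMulVec {n R : Type*} [Fintype n] [CommRing R]
    (x : Matrix n n R) (v : n → R) :
    (x * vecMulVec v v * x * vecMulVec v v).trace = (v ⬝ᵥ x *ᵥ v) ^ 2 := by
  rw [mul_vecMulVec, mul_vecMulVec, ← mulVec_mulVec, vecMulVec_mulVec, trace_vecMulVec]
  simp only [dotProduct_mulVec, dotProduct_comm, op_smul_eq_smul, dotProduct_smul, smul_eq_mul,
    sq]

theorem anisotropic_toQuadraticForm'_of_trace_ne_zero {n R : Type*} [Fintype n] [DecidableEq n]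
    [CommRing R] [NoZeroDivisors R] {x : Matrix n n R}
    (h : ∀ y : Matrix n n R, y.IsSymm → y ≠ 0 → (x * y * x * y).trace ≠ 0) :
    x.toQuadraticForm'.Anisotropic := by
  intro v hv
  by_contra hv0
  have hxv : v ⬝ᵥ x *ᵥ v = 0 := by simpa [toQuadraticForm', toLinearMap₂'_apply'] using hv
  apply h (vecMulVec v v) (transpose_vecMulVec v v) (vecMulVec_ne_zero hv0 hv0)
  rw [trace_mul_vecMulVec_mul_mul_vecMulVec, hxv, sq, zero_mul]

open scoped ComplexOrder in
theorem trace_conjTranspose_mul_self_pos {m n 𝕜 : Type*} [Fintype m] [Fintype n] [RCLike 𝕜]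
    {a : Matrix m n 𝕜} (ha : a ≠ 0) : 0 < (aᴴ * a).trace :=
  (posSemidef_conjTranspose_mul_self a).trace_nonneg.lt_of_ne'
    (trace_conjTranspose_mul_self_eq_zero_iff.not.mpr ha)

open scoped ComplexOrder MatrixOrder in
theorem PosDef.trace_mul_mul_mul_pos {n 𝕜 : Type*} [Fintype n] [DecidableEq n] [RCLike 𝕜]
    {x y : Matrix n n 𝕜} (hx : x.PosDef) (hy : y.IsHermitian) (hy0 : y ≠ 0) :
    0 < (x * y * x * y).trace := by
  obtain ⟨b, hb, rfl⟩ := CStarAlgebra.isStrictlyPositive_iff_eq_star_mul_self.mp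
    hx.isStrictlyPositive
  rw [star_eq_conjTranspose]
  set m := b * y * bᴴ
  have hm : mᴴ = m := by
    simp only [m, conjTranspose_mul, conjTranspose_conjTranspose, hy.eq, Matrix.mul_assoc]
  have hm0 : m ≠ 0 := by
    rwa [Ne, IsUnit.mul_left_eq_zero (star_eq_conjTranspose b ▸ hb.star), hb.mul_right_eq_zero]
  have htrace : (bᴴ * b * y * (bᴴ * b) * y).trace = (mᴴ * m).trace := by
    rw [hm, show m * m = b * y * bᴴ * b * y * bᴴ by simp only [m, Matrix.mul_assoc],
      trace_mul_comm _ bᴴ]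
    simp only [Matrix.mul_assoc]
  rw [htrace]
  exact trace_conjTranspose_mul_self_pos hm0

end Matrix

theorem stmt17_general {n : ℕ} (x : Matrix (Fin n) (Fin n) ℝ) (hx : x.IsSymm) :
    (x.PosDef ∨ (-x).PosDef) ↔
      ∀ y : Matrix (Fin n) (Fin n) ℝ, y.IsSymm → y ≠ 0 → 0 < (x * y * x * y).trace := by
  constructor
  · rintro (hpos | hneg) y hy hy0
    · exact hpos.trace_mul_mul_mul_pos (isHermitian_iff_isSymm.mpr hy) hy0
    · simpa using hneg.trace_mul_mul_mul_pos (isHermitian_iff_isSymm.mpr hy) hy0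
  · intro H
    have hanis := anisotropic_toQuadraticForm'_of_trace_ne_zero fun y hy hy0 ↦ (H y hy hy0).ne'
    refine hanis.posDef_or_posDef_neg.imp (.of_toQuadraticForm' hx) fun hneg ↦ ?_
    exact .of_toQuadraticForm' hx.neg (by rwa [toQuadraticForm'_neg])

theorem stmt17 {n : ℕ} (hn : 1 ≤ n) (x : Matrix (Fin n) (Fin n) ℝ) (hx : x.IsSymm) :
    (x.PosDef ∨ (-x).PosDef) ↔
      ∀ y : Matrix (Fin n) (Fin n) ℝ, y.IsSymm → y ≠ 0 → 0 < (x * y * x * y).trace :=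
  stmt17_general x hx
end

section
/- Let n ≥ 1 and let g be a linear bijection of the space M_n(ℝ) of real n×n matrices such that g(xᵀ) = g(x)ᵀ for all x and g(x)·y·g(x) = g(x·(ᵗg(y))·x) for all x,y ∈ M_n(ℝ) (ordinary matrix products), where ᵗg is the adjoint of g with respect to the bilinear form ⟨a,b⟩ = trace(ab). Let Ω ⊂ M_n(ℝ) be the set of symmetric positive definite matrices. Then gΩ = Ω or gΩ = −Ω. -/
/-!
Let `w` be the matrix with `tg w = 1`; the structural identity gives `g (x * x) = g x * w * g x`.
The positive definite matrices are the squares of the invertible symmetric ones, and `g` maps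
invertible symmetric matrices onto invertible symmetric matrices, so `g Ω` is the set of
congruences `b * w * b` by invertible symmetric `b`. Being the image of a convex cone, it is
closed under positive combinations, and all its elements are invertible. If `w` were indefinite,
conjugating it by the orthogonal reflection exchanging a positive and a negative eigenvector and
adding a suitable positive multiple of `w` would give a singular element. Hence `w` is definite,
so `g Ω ⊆ Ω` or `g Ω ⊆ -Ω`; the same holds for `g⁻¹`, which forces equality.
-/

open Matrix

section Structural

variable {R : Type*} [Monoid R]

/-- `g` is structural with structural adjoint `tg` in McCrimmon's sense, for the quadratic
representation `U_x y = x * y * x`: `U_{g x} = g ∘ U_x ∘ tg`. -/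
def IsStructural (g tg : R → R) : Prop :=
  ∀ x y, g x * y * g x = g (x * tg y * x)

theorem isUnit_of_mul_mul_eq_one {x a : R} (h : x * a * x = 1) : IsUnit x :=
  isUnit_iff_exists_and_exists.mpr ⟨⟨a * x, by rw [← mul_assoc, h]⟩, ⟨x * a, h⟩⟩

namespace IsStructural

variable {g tg : R → R}

theorem injective_adjoint (h : IsStructural g tg) (hg : Function.Surjective g) :
    Function.Injective tg := by
  intro c c' hc
  obtain ⟨x, hx⟩ := hg 1
  have := h x c
  rwa [hc, ← h x c', hx, one_mul, mul_one, one_mul, mul_one] at this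

theorem isUnit_apply (h : IsStructural g tg) (hg : Function.Surjective g)
    (htg : Function.Surjective tg) {x : R} (hx : IsUnit x) : IsUnit (g x) := by
  obtain ⟨u, rfl⟩ := hx
  obtain ⟨z, hz⟩ := hg 1
  obtain ⟨y, hy⟩ := htg (↑u⁻¹ * z * ↑u⁻¹)
  refine isUnit_of_mul_mul_eq_one (a := y) ?_
  rw [h, hy]
  simpa [mul_assoc] using hz

theorem isUnit_of_isUnit_apply (h : IsStructural g tg) (hg : Function.Injective g) {x : R}
    (hx : IsUnit (g x)) : IsUnit x := by
  obtain ⟨u, hu⟩ := hx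
  refine isUnit_of_mul_mul_eq_one (a := tg (↑u⁻¹ * g 1 * ↑u⁻¹)) (hg ?_)
  rw [← h, ← hu]
  simp [mul_assoc]

theorem symm {g tg : R ≃ R} (h : IsStructural g tg) : IsStructural g.symm tg.symm :=
  fun x y => g.eq_symm_apply.mpr (by simpa using (h (g.symm x) (tg.symm y)).symm)

end IsStructural

end Structural

theorem AddEquiv.image_eq_or_image_eq_neg {M : Type*} [AddGroup M] (e : M ≃+ M) {S : Set M}
    {a : M} (ha : a ∈ S) (hna : -a ∉ S) (he : e '' S ⊆ S ∨ e '' S ⊆ -S)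
    (he' : e.symm '' S ⊆ S ∨ e.symm '' S ⊆ -S) : e '' S = S ∨ e '' S = -S := by
  rcases he with he | he <;> rcases he' with he' | he'
  · exact .inl (he.antisymm fun b hb => ⟨e.symm b, he' ⟨b, hb, rfl⟩, e.apply_symm_apply b⟩)
  · exact absurd (by simpa using he' ⟨e a, he ⟨a, ha, rfl⟩, rfl⟩) hna
  · exact absurd (by simpa using he' ⟨-e a, he ⟨a, ha, rfl⟩, rfl⟩) hna
  · exact .inr (he.antisymm fun b hb =>
      ⟨e.symm b, by simpa using he' ⟨-b, hb, rfl⟩, e.apply_symm_apply b⟩)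

namespace Matrix

variable {ι : Type*} [DecidableEq ι]

theorem not_posDef_neg_one [Nonempty ι] : ¬ (-1 : Matrix ι ι ℝ).PosDef := fun h => by
  have := h.diag_pos (i := Classical.arbitrary ι)
  norm_num at this

variable [Fintype ι]

open scoped MatrixOrder in
theorem posDef_iff_exists_isSymm_mul_self {A : Matrix ι ι ℝ} :
    A.PosDef ↔ ∃ x : Matrix ι ι ℝ, x.IsSymm ∧ IsUnit x ∧ x * x = A := by
  constructor
  · intro hA
    have hpos : IsStrictlyPositive (CFC.sqrt A) :=
      IsStrictlyPositive.sqrt A (isStrictlyPositive_iff_posDef.mpr hA)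
    exact ⟨CFC.sqrt A, isHermitian_iff_isSymm.mp hpos.nonneg.posSemidef.isHermitian, hpos.isUnit,
      CFC.sqrt_mul_sqrt_self A hA.posSemidef.nonneg⟩
  · rintro ⟨x, hxs, hxu, rfl⟩
    simpa [star_eq_conjTranspose, hxs.eq] using
      hxu.posDef_star_left_conjugate_iff.mpr (PosDef.one (n := ι) (R := ℝ))

theorem IsSymm.posDef_mul_mul_iff {b w : Matrix ι ι ℝ} (hb : b.IsSymm) (hbu : IsUnit b) :
    (b * w * b).PosDef ↔ w.PosDef := by
  simpa [star_eq_conjTranspose, hb.eq] using hbu.posDef_star_left_conjugate_iff (x := w)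

theorem swap_mul_diagonal_mul_swap {R : Type*} [Semiring R] (i j : ι) (d : ι → R) :
    swap R i j * diagonal d * swap R i j = diagonal (d ∘ Equiv.swap i j) := by
  simp [swap, Equiv.Perm.permMatrix, PEquiv.toMatrix_toPEquiv_mul, PEquiv.mul_toMatrix_toPEquiv,
    submatrix_diagonal_equiv]

theorem IsHermitian.posDef_or_neg_posDef_of_isUnit_add_smul {w : Matrix ι ι ℝ}
    (hw : w.IsHermitian)
    (h : ∀ b : Matrix ι ι ℝ, b.IsSymm → IsUnit b →
      ∀ t : ℝ, 0 < t → IsUnit (w + t • (b * w * b))) :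
    w.PosDef ∨ (-w).PosDef := by
  set φ := Unitary.conjStarAlgAut ℝ (Matrix ι ι ℝ) hw.eigenvectorUnitary
  set d := hw.eigenvalues
  have hφ : w = φ (diagonal d) := by simpa [φ, d] using hw.spectral_theorem
  have hφu : ∀ x, IsUnit (φ x) ↔ IsUnit x := isUnit_map_iff φ
  have hφpos : ∀ x, (φ x).PosDef ↔ x.PosDef := fun x => by
    simpa [φ] using
      Unitary.isUnit_coe.posDef_star_right_conjugate_iff (U := hw.eigenvectorUnitary) (x := x)
  have hneg : (-w).PosDef ↔ ∀ i, d i < 0 := by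
    rw [hφ, ← map_neg, hφpos, diagonal_neg, posDef_diagonal_iff]
    simp
  rw [hw.posDef_iff_eigenvalues_pos, hneg]
  by_contra! hne
  obtain ⟨⟨k, hk : d k ≤ 0⟩, ⟨l, hl⟩⟩ := hne
  -- For `b` the transposition of the eigenvectors `i` and `j`, the `i`-th eigenvalue of
  -- `w + t • (b * w * b)` is `d i + t * d j`.
  obtain ⟨i, j, t, ht, hij⟩ : ∃ i j : ι, ∃ t : ℝ, 0 < t ∧ d i + t * d j = 0 := by
    rcases hk.lt_or_eq with hk | hk
    · rcases hl.lt_or_eq' with hl | hl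
      · exact ⟨k, l, -d k / d l, div_pos (neg_pos.mpr hk) hl, by field_simp; ring⟩
      · exact ⟨l, l, 1, one_pos, by rw [hl]; ring⟩
    · exact ⟨k, k, 1, one_pos, by rw [hk]; ring⟩
  have hb : (φ (swap ℝ i j)).IsSymm := by
    rw [← isHermitian_iff_isSymm, IsHermitian, ← star_eq_conjTranspose, ← map_star,
      star_eq_conjTranspose, conjTranspose_swap]
  have hbu : IsUnit (φ (swap ℝ i j)) :=
    (hφu _).mpr (isUnit_iff_exists.mpr ⟨_, swap_mul_self i j, swap_mul_self i j⟩)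
  have hunit := h _ hb hbu t ht
  rw [hφ, ← map_mul, ← map_mul, swap_mul_diagonal_mul_swap, ← map_smul, ← map_add, hφu,
    ← diagonal_smul, diagonal_add, isUnit_diagonal] at hunit
  simpa [hij] using hunit.apply i

end Matrix

namespace IsStructural

variable {ι : Type*} [Fintype ι] [DecidableEq ι] {g : Matrix ι ι ℝ ≃ₗ[ℝ] Matrix ι ι ℝ}
  {tg : Matrix ι ι ℝ → Matrix ι ι ℝ} {w : Matrix ι ι ℝ}

theorem image_posDef_eq (h : IsStructural g tg) (htg : Function.Surjective tg)
    (hstar : ∀ x, g xᵀ = (g x)ᵀ) (hw : tg w = 1) :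
    g '' {A | A.PosDef} = {A | ∃ b, b.IsSymm ∧ IsUnit b ∧ b * w * b = A} := by
  have hsq : ∀ x, g (x * x) = g x * w * g x := fun x => by rw [h, hw, mul_one]
  ext A
  simp only [Set.mem_image, Set.mem_ofPred_eq, posDef_iff_exists_isSymm_mul_self]
  constructor
  · rintro ⟨_, ⟨x, hxs, hxu, rfl⟩, rfl⟩
    exact ⟨g x, by rw [IsSymm, ← hstar, hxs.eq], h.isUnit_apply g.surjective htg hxu,
      (hsq x).symm⟩
  · rintro ⟨b, hbs, hbu, rfl⟩
    refine ⟨g.symm b * g.symm b, ⟨g.symm b, g.injective ?_,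
      h.isUnit_of_isUnit_apply g.injective (by simpa using hbu), rfl⟩, by simp [hsq]⟩
    rw [hstar, g.apply_symm_apply, hbs.eq]

theorem isSymm_of_adjoint_apply_eq_one (h : IsStructural g tg) (htg : Function.Surjective tg)
    (hstar : ∀ x, g xᵀ = (g x)ᵀ) (hw : tg w = 1) : w.IsSymm := by
  obtain ⟨s, hs, rfl⟩ : w ∈ g '' {A | A.PosDef} := by
    rw [h.image_posDef_eq htg hstar hw]
    exact ⟨1, isSymm_one, isUnit_one, by simp⟩
  rw [IsSymm, ← hstar, (isHermitian_iff_isSymm.mp hs.isHermitian).eq]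

theorem posDef_or_neg_posDef (h : IsStructural g tg) (htg : Function.Surjective tg)
    (hstar : ∀ x, g xᵀ = (g x)ᵀ) (hw : tg w = 1) : w.PosDef ∨ (-w).PosDef := by
  have hmem : ∀ b, b.IsSymm → IsUnit b → b * w * b ∈ g '' {A | A.PosDef} := fun b hb hbu => by
    rw [h.image_posDef_eq htg hstar hw]
    exact ⟨b, hb, hbu, rfl⟩
  refine (isHermitian_iff_isSymm.mpr (h.isSymm_of_adjoint_apply_eq_one htg hstar hw))
    |>.posDef_or_neg_posDef_of_isUnit_add_smul fun b hb hbu t ht => ?_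
  obtain ⟨s₁, hs₁, hgs₁⟩ := hmem 1 isSymm_one isUnit_one
  obtain ⟨s₂, hs₂, hgs₂⟩ := hmem b hb hbu
  have : g (s₁ + t • s₂) = w + t • (b * w * b) := by
    rw [map_add, map_smul, hgs₁, hgs₂, one_mul, mul_one]
  rw [← this]
  exact h.isUnit_apply g.surjective htg (hs₁.add (hs₂.smul ht)).isUnit

theorem image_posDef_subset (h : IsStructural g tg) (htg : Function.Surjective tg)
    (hstar : ∀ x, g xᵀ = (g x)ᵀ) :
    g '' {A | A.PosDef} ⊆ {A | A.PosDef} ∨ g '' {A | A.PosDef} ⊆ -{A | A.PosDef} := by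
  obtain ⟨w, hw⟩ := htg 1
  rw [h.image_posDef_eq htg hstar hw]
  refine (h.posDef_or_neg_posDef htg hstar hw).imp ?_ ?_ <;> rintro hw' _ ⟨b, hb, hbu, rfl⟩
  · exact (hb.posDef_mul_mul_iff hbu).mpr hw'
  · simpa [Set.mem_neg] using (hb.posDef_mul_mul_iff hbu).mpr hw'

end IsStructural

theorem stmt19_general {n : ℕ} (hn : 1 ≤ n)
    (g : Matrix (Fin n) (Fin n) ℝ →ₗ[ℝ] Matrix (Fin n) (Fin n) ℝ)
    (hg : Function.Bijective g)
    (hstar : ∀ x : Matrix (Fin n) (Fin n) ℝ, g xᵀ = (g x)ᵀ)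
    (tg : Matrix (Fin n) (Fin n) ℝ →ₗ[ℝ] Matrix (Fin n) (Fin n) ℝ)
    (hstr : ∀ x y : Matrix (Fin n) (Fin n) ℝ, g x * y * g x = g (x * tg y * x)) :
    ⇑g '' {A : Matrix (Fin n) (Fin n) ℝ | A.PosDef} = {A : Matrix (Fin n) (Fin n) ℝ | A.PosDef} ∨
      ⇑g '' {A : Matrix (Fin n) (Fin n) ℝ | A.PosDef} =
        -{A : Matrix (Fin n) (Fin n) ℝ | A.PosDef} := by
  have : Nonempty (Fin n) := ⟨⟨0, hn⟩⟩
  have htg_inj : Function.Injective tg := IsStructural.injective_adjoint hstr hg.2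
  set e := LinearEquiv.ofBijective g hg
  have hge : ⇑e = ⇑g := rfl
  set te := Equiv.ofBijective tg ⟨htg_inj, LinearMap.injective_iff_surjective.mp htg_inj⟩
  have hte : ⇑te = ⇑tg := rfl
  have he : IsStructural e te := by rw [hge, hte]; exact hstr
  have hstar' : ∀ x, e xᵀ = (e x)ᵀ := by rw [hge]; exact hstar
  have hstar_symm : ∀ x, e.symm xᵀ = (e.symm x)ᵀ := fun x => e.injective <| by
    rw [e.apply_symm_apply, hstar', e.apply_symm_apply]
  have he_symm : IsStructural e.symm te.symm := IsStructural.symm (g := e.toEquiv) he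
  rw [← hge]
  exact e.toAddEquiv.image_eq_or_image_eq_neg PosDef.one not_posDef_neg_one
    (he.image_posDef_subset te.surjective hstar')
    (he_symm.image_posDef_subset te.symm.surjective hstar_symm)

theorem stmt19 {n : ℕ} (hn : 1 ≤ n)
    (g : Matrix (Fin n) (Fin n) ℝ →ₗ[ℝ] Matrix (Fin n) (Fin n) ℝ)
    (hg : Function.Bijective g)
    (hstar : ∀ x : Matrix (Fin n) (Fin n) ℝ, g xᵀ = (g x)ᵀ)
    (tg : Matrix (Fin n) (Fin n) ℝ →ₗ[ℝ] Matrix (Fin n) (Fin n) ℝ)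
    (htg : ∀ a b : Matrix (Fin n) (Fin n) ℝ, (g a * b).trace = (a * tg b).trace)
    (hstr : ∀ x y : Matrix (Fin n) (Fin n) ℝ, g x * y * g x = g (x * tg y * x)) :
    ⇑g '' {A : Matrix (Fin n) (Fin n) ℝ | A.PosDef} = {A : Matrix (Fin n) (Fin n) ℝ | A.PosDef} ∨
      ⇑g '' {A : Matrix (Fin n) (Fin n) ℝ | A.PosDef} =
        -{A : Matrix (Fin n) (Fin n) ℝ | A.PosDef} :=
  stmt19_general hn g hg hstar tg hstr
end
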